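/- Let k ∈ ℕ, α > 0, θ ∈ ℝ^k, and suppose σ_P² satisfies α² + ‖θ‖²/k ≤ σ_P² ≤ e^{1/k}(α² + ‖θ‖²/k). Then the KL divergence (1/2)[(kα² + ‖θ‖²)/σ_P² - k + k ln(σ_P²/α²)] is at most (1/2)[1 + k ln(1 + ‖θ‖²/(kα²))]. -/

import Mathlib

/-!
Write `v = α² + ‖θ‖²/k` for the prior variance matched to the posterior. The lower end of the
bracket makes the trace term `(kα² + ‖θ‖²)/σ_P² = k v/σ_P²` at most `k`, so it cancels against
`-k`; the upper end costs at most `log e^{1/k} = 1/k` in `log(σ_P²/α²)` compared with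
`log(v/α²) = log(1 + ‖θ‖²/(kα²))`, i.e. at most `1` after multiplying by `k`.
-/

open Real

lemma add_mul_div_le_of_add_div_le {k a t σ : ℝ} (hk : 0 < k) (hσ : 0 < σ)
    (h : a + t / k ≤ σ) : (k * a + t) / σ ≤ k := by
  have hka : k * a + t = k * (a + t / k) := by field_simp
  rw [div_le_iff₀ hσ, hka]
  exact mul_le_mul_of_nonneg_left h hk.le

lemma log_div_le_add_log_div_of_le_exp_mul {x v a c : ℝ} (hx : 0 < x) (hv : 0 < v) (ha : 0 < a)
    (h : x ≤ exp c * v) : log (x / a) ≤ c + log (v / a) := by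
  rw [log_div hx.ne' ha.ne', log_div hv.ne' ha.ne']
  have := log_le_log hx h
  rw [log_mul (exp_ne_zero c) hv.ne', log_exp] at this
  linarith

lemma trace_sub_add_mul_log_le_of_mem_bracket {k a t σ : ℝ} (hk : 0 < k) (ha : 0 < a)
    (ht : 0 ≤ t) (hlo : a + t / k ≤ σ) (hhi : σ ≤ exp (1 / k) * (a + t / k)) :
    (k * a + t) / σ - k + k * log (σ / a) ≤ 1 + k * log (1 + t / (k * a)) := by
  have hv : 0 < a + t / k := by positivity
  have hσ : 0 < σ := hv.trans_le hlo
  have htrace : (k * a + t) / σ ≤ k := add_mul_div_le_of_add_div_le hk hσ hlo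
  have hmatched : (a + t / k) / a = 1 + t / (k * a) := by field_simp
  have hlog : log (σ / a) ≤ 1 / k + log (1 + t / (k * a)) := by
    rw [← hmatched]
    exact log_div_le_add_log_div_of_le_exp_mul hσ hv ha hhi
  calc (k * a + t) / σ - k + k * log (σ / a)
      ≤ k * (1 / k + log (1 + t / (k * a))) := by
        linarith [mul_le_mul_of_nonneg_left hlog hk.le]
    _ = 1 + k * log (1 + t / (k * a)) := by field_simp

/-- If `σ_P²` lies in the bracket `[α² + ‖θ‖²/k, e^{1/k}(α² + ‖θ‖²/k)]`, then the
KL divergence `(1/2)[(kα² + ‖θ‖²)/σ_P² - k + k ln(σ_P²/α²)]` is at most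
`(1/2)[1 + k ln(1 + ‖θ‖²/(kα²))]`. -/
theorem klDiv_bound_of_sigma_bracket (k : ℕ) (hk : 0 < k) (α : ℝ) (hα : 0 < α)
    (θ : EuclideanSpace ℝ (Fin k)) (σP2 : ℝ)
    (hlo : α ^ 2 + ‖θ‖ ^ 2 / k ≤ σP2)
    (hhi : σP2 ≤ Real.exp (1 / k) * (α ^ 2 + ‖θ‖ ^ 2 / k)) :
    (1 / 2) * ((k * α ^ 2 + ‖θ‖ ^ 2) / σP2 - k + k * Real.log (σP2 / α ^ 2))
      ≤ (1 / 2) * (1 + k * Real.log (1 + ‖θ‖ ^ 2 / (k * α ^ 2))) := by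
  have h := trace_sub_add_mul_log_le_of_mem_bracket (by exact_mod_cast hk) (pow_pos hα 2)
    (sq_nonneg ‖θ‖) hlo hhi
  linarith
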